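/- Let Λ be the 1-graph with vertices {v_n : n ∈ ℕ}, two edges f, g from v_1 to v_0, and a single edge e_n from v_{n+1} to v_n for each n ≥ 1. Then the first categorical cohomology group H^1(Λ, Z) with constant coefficients Z is isomorphic to Z, generated by the cocycle c with c(λ) = 1 if λ = f e_1 ··· e_ℓ for some ℓ, and c(λ) = 0 otherwise. In particular, the cocycle c with c(f) = 1, c(g) = 0 is not a coboundary: there is no function b : Λ^0 → Z with c(λ) = b(r(λ)) − b(s(λ)) for all λ. -/

import Mathlib

open CategoryTheory

/-- The edges of the `1`-graph `Λ`: vertices are `ℕ` (vertex `n` is `vₙ`), with two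
edges `f, g` from `v₁` to `v₀` and a single edge `eₙ` from `v_{n+1}` to `vₙ` for each
`n ≥ 1` (`Edge.e n` is the edge `e_{n+1} : v_{n+2} → v_{n+1}`).  An edge from `a` to
`b` is a quiver arrow `a ⟶ b` (sources are domains). -/
inductive Edge : ℕ → ℕ → Type
  | f : Edge 1 0
  | g : Edge 1 0
  | e (n : ℕ) : Edge (n + 2) (n + 1)

instance : Quiver ℕ := ⟨Edge⟩

/-- The `1`-cocycle on the path category `Λ` counting occurrences of the edge `f`:
`cF(λ) = 1` if `λ = f e₁ ⋯ e_ℓ` for some `ℓ` (i.e. `λ` passes through `f`), and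
`cF(λ) = 0` otherwise. -/
def cF : ∀ {a b : ℕ}, Quiver.Path a b → ℤ
  | _, _, .nil => 0
  | _, _, .cons p ed => cF p + (match ed with | .f => 1 | .g => 0 | .e _ => 0)

/-!
A cocycle on a path category is determined by its values on edges. Integrating a cocycle `c`
along the spanning tree `{g, e₁, e₂, …}` gives a potential `β` whose coboundary agrees with `c`
on every tree edge, so `c - δβ` is supported on the one remaining edge `f` and is therefore
`(c(f) - c(g)) · cF`. Conversely a coboundary takes the same value on the parallel edges `f`
and `g`, whereas `m · cF` does not unless `m = 0`.
-/

def IsPathCocycle {V A : Type*} [Quiver V] [Add A] (c : ∀ a b : V, Quiver.Path a b → A) : Prop :=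
  ∀ (a b d : V) (p : Quiver.Path a b) (q : Quiver.Path b d), c a d (p.comp q) = c a b p + c b d q

namespace IsPathCocycle

variable {V A : Type*} [Quiver V]

theorem map_nil [AddMonoid A] [IsLeftCancelAdd A] {c : ∀ a b : V, Quiver.Path a b → A}
    (hc : IsPathCocycle c) (a : V) : c a a .nil = 0 :=
  left_eq_add.mp (hc a a a .nil .nil)

theorem map_cons [Add A] {c : ∀ a b : V, Quiver.Path a b → A} (hc : IsPathCocycle c)
    {a b d : V} (p : Quiver.Path a b) (e : b ⟶ d) : c a d (p.cons e) = c a b p + c b d e.toPath :=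
  hc a b d p e.toPath

theorem ext [AddMonoid A] [IsLeftCancelAdd A] {c c' : ∀ a b : V, Quiver.Path a b → A}
    (hc : IsPathCocycle c) (hc' : IsPathCocycle c')
    (h : ∀ (a b : V) (e : a ⟶ b), c a b e.toPath = c' a b e.toPath) {a b : V} (p : Quiver.Path a b) :
    c a b p = c' a b p := by
  induction p with
  | nil => rw [hc.map_nil, hc'.map_nil]
  | cons p e ih => rw [hc.map_cons, hc'.map_cons, ih, h]

end IsPathCocycle

@[simp] theorem cF_f : cF (Quiver.Hom.toPath (V := ℕ) .f) = 1 := by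
  simp [Quiver.Hom.toPath, cF]

@[simp] theorem cF_g : cF (Quiver.Hom.toPath (V := ℕ) .g) = 0 := by
  simp [Quiver.Hom.toPath, cF]

@[simp] theorem cF_e (n : ℕ) : cF (Quiver.Hom.toPath (V := ℕ) (.e n)) = 0 := by
  simp [Quiver.Hom.toPath, cF]

theorem cF_cons {a b c : ℕ} (p : Quiver.Path a b) (e : b ⟶ c) :
    cF (p.cons e) = cF p + cF e.toPath := by
  change Edge _ _ at e
  cases e <;> simp [Quiver.Hom.toPath, cF]

theorem cF_comp {a b c : ℕ} (p : Quiver.Path a b) (q : Quiver.Path b c) :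
    cF (p.comp q) = cF p + cF q := by
  induction q with
  | nil => simp [cF]
  | cons q e ih => rw [Quiver.Path.comp_cons, cF_cons, cF_cons, ih, add_assoc]

def treePotential (c : ∀ a b : ℕ, Quiver.Path a b → ℤ) : ℕ → ℤ
  | 0 => 0
  | 1 => -c 1 0 (Quiver.Hom.toPath (V := ℕ) .g)
  | n + 2 => treePotential c (n + 1) - c (n + 2) (n + 1) (Quiver.Hom.toPath (V := ℕ) (.e n))

theorem IsPathCocycle.eq_mul_cF_add_coboundary {c : ∀ a b : ℕ, Quiver.Path a b → ℤ}
    (hc : IsPathCocycle c) {a b : ℕ} (p : Quiver.Path a b) :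
    c a b p = (c 1 0 (Quiver.Hom.toPath (V := ℕ) .f) - c 1 0 (Quiver.Hom.toPath (V := ℕ) .g)) * cF p
      + (treePotential c b - treePotential c a) := by
  set m := c 1 0 (Quiver.Hom.toPath (V := ℕ) .f) - c 1 0 (Quiver.Hom.toPath (V := ℕ) .g)
  set β := treePotential c
  refine hc.ext (c' := fun a b p => m * cF p + (β b - β a)) (fun _ _ _ p q => ?_) (fun _ _ e => ?_) p
  · beta_reduce
    rw [cF_comp]
    ring
  · change Edge _ _ at e
    cases e <;> simp [m, β, treePotential]

theorem eq_zero_of_mul_cF_eq_coboundary {m : ℤ} {β : ℕ → ℤ}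
    (h : ∀ (a b : ℕ) (p : Quiver.Path a b), m * cF p = β b - β a) : m = 0 := by
  have hf := h 1 0 (Quiver.Hom.toPath (V := ℕ) .f)
  have hg := h 1 0 (Quiver.Hom.toPath (V := ℕ) .g)
  rw [cF_f, mul_one] at hf
  rw [cF_g, mul_zero] at hg
  rw [hf, ← hg]

/-- For the `1`-graph `Λ` above, `H¹(Λ, ℤ) ≅ ℤ`, generated by the cocycle `cF`
(which takes the value `1` exactly on the paths `f e₁ ⋯ e_ℓ`); in particular the
cocycle with `c(f) = 1`, `c(g) = 0` is not a coboundary. -/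
theorem stmt_17 :
    -- `cF` is a `1`-cocycle (an additive function on paths) with `cF(f) = 1`,
    -- `cF(g) = 0`, `cF(eₙ) = 0`
    (∀ {a b c : ℕ} (p : Quiver.Path a b) (q : Quiver.Path b c),
        cF (p.comp q) = cF p + cF q) ∧
    cF (Quiver.Path.nil.cons (Edge.f : (1 : ℕ) ⟶ 0)) = 1 ∧
    cF (Quiver.Path.nil.cons (Edge.g : (1 : ℕ) ⟶ 0)) = 0 ∧
    (∀ n : ℕ, cF (Quiver.Path.nil.cons (Edge.e n : (n + 2 : ℕ) ⟶ (n + 1))) = 0) ∧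
    -- every `ℤ`-valued `1`-cocycle is cohomologous to a unique multiple of `cF`,
    -- i.e. `H¹(Λ, ℤ) ≅ ℤ` with generator `[cF]`
    (∀ c : ∀ a b : ℕ, Quiver.Path a b → ℤ,
        (∀ (a b e : ℕ) (p : Quiver.Path a b) (q : Quiver.Path b e),
            c a e (p.comp q) = c a b p + c b e q) →
        ∃ (m : ℤ) (β : ℕ → ℤ), ∀ (a b : ℕ) (p : Quiver.Path a b),
          c a b p = m * cF p + (β b - β a)) ∧
    (∀ m : ℤ, (∃ β : ℕ → ℤ, ∀ (a b : ℕ) (p : Quiver.Path a b), m * cF p = β b - β a)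
        → m = 0) ∧
    -- in particular, `cF` is not a coboundary: there is no `b : Λ⁰ → ℤ` with
    -- `cF(λ) = b(r(λ)) - b(s(λ))`
    ¬ ∃ β : ℕ → ℤ, ∀ (a b : ℕ) (p : Quiver.Path a b), cF p = β b - β a := by
  have h_unique : ∀ m : ℤ, (∃ β : ℕ → ℤ, ∀ (a b : ℕ) (p : Quiver.Path a b),
      m * cF p = β b - β a) → m = 0 :=
    fun _ ⟨_, hβ⟩ => eq_zero_of_mul_cF_eq_coboundary hβ
  refine ⟨cF_comp, cF_f, cF_g, cF_e,
    fun c hc => ⟨_, _, fun _ _ p => IsPathCocycle.eq_mul_cF_add_coboundary hc p⟩, h_unique, ?_⟩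
  rintro ⟨β, hβ⟩
  exact one_ne_zero (h_unique 1 ⟨β, fun a b p => (one_mul _).trans (hβ a b p)⟩)
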